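/- arXiv:2109.07517 — 2 statements merged into one kernel-verified Lean document; each statement's English description precedes it below -/
import Mathlib

section
/- Let ρ be a density operator on H_B ⊗ H_C, and for b ∈ {0,1} let P_b on H_B and Q_b on H_C satisfy 0 ≼ P_b ≼ I and 0 ≼ Q_b ≼ I. If τ := (1/2)·Tr[(P_0 ⊗ Q_0)ρ] + (1/2)·Tr[(P_1 ⊗ Q_1)ρ], then Tr[(P_0 ⊗ Q_1)ρ] ≥ 2τ − 1. -/
open ComplexOrder Matrix Kronecker

section aux

variable {l : Type*} [Fintype l] [DecidableEq l]

lemma aux_diag_nonneg {S : Matrix l l ℂ} (hS : S.PosSemidef) (i : l) : 0 ≤ S i i := by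
  exact hS.diag_nonneg

lemma aux_trace_nonneg {S : Matrix l l ℂ} (hS : S.PosSemidef) : 0 ≤ S.trace := by
  rw [Matrix.trace]
  exact Finset.sum_nonneg fun i _ => aux_diag_nonneg hS i

lemma aux_trace_mul_nonneg {M ρ : Matrix l l ℂ} (hM : M.PosSemidef) (hρ : ρ.PosSemidef) :
    0 ≤ ((M * ρ).trace).re := by
  obtain ⟨B, hB⟩ : ∃ B : Matrix l l ℂ, ρ = Bᴴ * B := by
    open scoped MatrixOrder in exact CStarAlgebra.nonneg_iff_eq_star_mul_self.mp hρ.nonneg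
  have h : (M * ρ).trace = (B * M * Bᴴ).trace := by
    rw [hB, ← Matrix.mul_assoc, Matrix.trace_mul_cycle]
  rw [h]
  have := aux_trace_nonneg (hM.mul_mul_conjTranspose_same B)
  exact (Complex.le_def.mp this).1

lemma aux_conjTranspose_kronecker {a b : Type*} (A : Matrix a a ℂ) (B : Matrix b b ℂ) :
    (A ⊗ₖ B)ᴴ = Aᴴ ⊗ₖ Bᴴ := by
  ext ⟨i, j⟩ ⟨k, l⟩
  simp [Matrix.conjTranspose_apply, Matrix.kroneckerMap_apply]

lemma aux_kronecker_posSemidef {a b : Type*} [Fintype a] [Fintype b] [DecidableEq a]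
    [DecidableEq b] {A : Matrix a a ℂ} {B : Matrix b b ℂ}
    (hA : A.PosSemidef) (hB : B.PosSemidef) : (A ⊗ₖ B).PosSemidef := by
  obtain ⟨C, hC⟩ : ∃ C : Matrix a a ℂ, A = Cᴴ * C := by
    open scoped MatrixOrder in exact CStarAlgebra.nonneg_iff_eq_star_mul_self.mp hA.nonneg
  obtain ⟨D, hD⟩ : ∃ D : Matrix b b ℂ, B = Dᴴ * D := by
    open scoped MatrixOrder in exact CStarAlgebra.nonneg_iff_eq_star_mul_self.mp hB.nonneg
  have : A ⊗ₖ B = (C ⊗ₖ D)ᴴ * (C ⊗ₖ D) := by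
    rw [aux_conjTranspose_kronecker, ← Matrix.mul_kronecker_mul, hC, hD]
  rw [this]
  exact Matrix.posSemidef_conjTranspose_mul_self _

lemma aux_sub_kronecker {a b : Type*} (A A' : Matrix a a ℂ) (B : Matrix b b ℂ) :
    (A - A') ⊗ₖ B = A ⊗ₖ B - A' ⊗ₖ B := by
  ext ⟨i, j⟩ ⟨k, l⟩
  simp [Matrix.kroneckerMap_apply, sub_mul]

lemma aux_kronecker_sub {a b : Type*} (A : Matrix a a ℂ) (B B' : Matrix b b ℂ) :
    A ⊗ₖ (B - B') = A ⊗ₖ B - A ⊗ₖ B' := by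
  ext ⟨i, j⟩ ⟨k, l⟩
  simp [Matrix.kroneckerMap_apply, mul_sub]

end aux

/-- If `τ = ½ Tr[(P₀ ⊗ Q₀)ρ] + ½ Tr[(P₁ ⊗ Q₁)ρ]` then `Tr[(P₀ ⊗ Q₁)ρ] ≥ 2τ - 1`. -/
theorem stmt_2 {m n : ℕ} (P₀ P₁ : Matrix (Fin m) (Fin m) ℂ) (Q₀ Q₁ : Matrix (Fin n) (Fin n) ℂ)
    (hP₀ : P₀.PosSemidef) (hP₀1 : ((1 : Matrix (Fin m) (Fin m) ℂ) - P₀).PosSemidef)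
    (hP₁ : P₁.PosSemidef) (hP₁1 : ((1 : Matrix (Fin m) (Fin m) ℂ) - P₁).PosSemidef)
    (hQ₀ : Q₀.PosSemidef) (hQ₀1 : ((1 : Matrix (Fin n) (Fin n) ℂ) - Q₀).PosSemidef)
    (hQ₁ : Q₁.PosSemidef) (hQ₁1 : ((1 : Matrix (Fin n) (Fin n) ℂ) - Q₁).PosSemidef)
    (ρ : Matrix (Fin m × Fin n) (Fin m × Fin n) ℂ)
    (hρ : ρ.PosSemidef) (hρtr : ρ.trace = 1)
    (τ : ℝ)
    (hτ : τ = (1/2) * ((P₀ ⊗ₖ Q₀) * ρ).trace.re + (1/2) * ((P₁ ⊗ₖ Q₁) * ρ).trace.re) :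
    2 * τ - 1 ≤ ((P₀ ⊗ₖ Q₁) * ρ).trace.re := by
  have h1 := aux_trace_mul_nonneg (aux_kronecker_posSemidef hP₀1 hQ₁1) hρ
  have h2 := aux_trace_mul_nonneg (aux_kronecker_posSemidef hP₀ hQ₀1) hρ
  have h3 := aux_trace_mul_nonneg (aux_kronecker_posSemidef hP₁1 hQ₁) hρ
  have key : ((1 : Matrix (Fin m) (Fin m) ℂ) - P₀) ⊗ₖ ((1 : Matrix (Fin n) (Fin n) ℂ) - Q₁)
      + P₀ ⊗ₖ ((1 : Matrix (Fin n) (Fin n) ℂ) - Q₀)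
      + ((1 : Matrix (Fin m) (Fin m) ℂ) - P₁) ⊗ₖ Q₁
      = 1 + P₀ ⊗ₖ Q₁ - P₀ ⊗ₖ Q₀ - P₁ ⊗ₖ Q₁ := by
    have e1 : ((1 : Matrix (Fin m) (Fin m) ℂ)) ⊗ₖ ((1 : Matrix (Fin n) (Fin n) ℂ)) = 1 :=
      Matrix.one_kronecker_one
    simp only [aux_sub_kronecker, aux_kronecker_sub, e1]
    abel
  have keyTr := congrArg (fun M => ((M * ρ).trace).re) key
  simp only [Matrix.add_mul, Matrix.sub_mul, Matrix.one_mul, Matrix.trace_add, Matrix.trace_sub,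
    Complex.add_re, Complex.sub_re, hρtr, Complex.one_re] at keyTr
  linarith
end

section
/- Let W_0, W_1 be events and b a uniformly random bit on a probability space, with W_0, W_1 possibly depending on b. If for some p' we have Pr[W_0' ∧ W_1'] = p' where Pr[W_0'] = Pr[W_0 | b = 0] and Pr[W_1'] = Pr[W_1 | b = 1], then Pr[W_0 ∧ W_1] ≤ 1/2 + p'/2. -/
/-!
On the event `b = 0` the joint win implies `W₀`, and on `b = 1` it implies `W₁`, so
`Pr[W₀ ∧ W₁] ≤ ½ Pr[W₀ | b = 0] + ½ Pr[W₁ | b = 1] = ½ (Pr[W₀'] + Pr[W₁'])`,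
and inclusion–exclusion on the other space gives `Pr[W₀'] + Pr[W₁'] ≤ 1 + Pr[W₀' ∧ W₁']`.
-/

open MeasureTheory ProbabilityTheory

open scoped ENNReal

section

variable {Ω : Type*} [MeasurableSpace Ω]

theorem measure_inter_le_mul_cond (μ : Measure Ω) {s : Set Ω} (hs : μ s ≠ ∞) (t : Set Ω) :
    μ (s ∩ t) ≤ μ s * μ[t|s] := by
  rcases eq_or_ne (μ s) 0 with hs₀ | hs₀
  · simp [measure_mono_null Set.inter_subset_left hs₀]
  calc μ (s ∩ t) ≤ μ.restrict s t := by rw [Set.inter_comm]; exact Measure.le_restrict_apply s t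
    _ = μ s * μ[t|s] := by
      rw [ProbabilityTheory.cond, Measure.smul_apply, smul_eq_mul, ← mul_assoc,
        ENNReal.mul_inv_cancel hs₀ hs, one_mul]

theorem measure_inter_le_add_of_bool (μ : Measure Ω) (b : Ω → Bool) (s t : Set Ω) :
    μ (s ∩ t) ≤ μ (b ⁻¹' {false} ∩ s) + μ (b ⁻¹' {true} ∩ t) := by
  refine (measure_mono fun x hx => ?_).trans (measure_union_le _ _)
  cases hx' : b x
  · exact Or.inl ⟨hx', hx.1⟩
  · exact Or.inr ⟨hx', hx.2⟩

theorem measure_add_measure_le_one_add_inter (μ : Measure Ω) [IsProbabilityMeasure μ]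
    (s : Set Ω) {t : Set Ω} (ht : MeasurableSet t) :
    μ s + μ t ≤ 1 + μ (s ∩ t) := by
  rw [← measure_union_add_inter s ht]
  gcongr
  exact prob_le_one

end

theorem stmt_3_general {Ω Ω' : Type*} [MeasurableSpace Ω] [MeasurableSpace Ω']
    (μ : Measure Ω) (μ' : Measure Ω') [IsProbabilityMeasure μ']
    (W₀ W₁ : Set Ω)
    (W₀' W₁' : Set Ω') (hW₁' : MeasurableSet W₁')
    (b : Ω → Bool)
    (hb0 : μ (b ⁻¹' {false}) = 1/2) (hb1 : μ (b ⁻¹' {true}) = 1/2)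
    (p' : ENNReal) (hp' : μ' (W₀' ∩ W₁') = p')
    (h0 : μ' W₀' = (μ[|b ⁻¹' {false}]) W₀)
    (h1 : μ' W₁' = (μ[|b ⁻¹' {true}]) W₁) :
    μ (W₀ ∩ W₁) ≤ 1/2 + p'/2 := by
  have half_ne_top : (1/2 : ℝ≥0∞) ≠ ∞ := by simp
  calc μ (W₀ ∩ W₁) ≤ μ (b ⁻¹' {false} ∩ W₀) + μ (b ⁻¹' {true} ∩ W₁) :=
        measure_inter_le_add_of_bool μ b W₀ W₁
    _ ≤ 1/2 * μ' W₀' + 1/2 * μ' W₁' := by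
        rw [h0, h1]
        gcongr
        · exact hb0 ▸ measure_inter_le_mul_cond μ (hb0 ▸ half_ne_top) W₀
        · exact hb1 ▸ measure_inter_le_mul_cond μ (hb1 ▸ half_ne_top) W₁
    _ = (μ' W₀' + μ' W₁') / 2 := by
        simp only [one_div, ENNReal.div_eq_inv_mul, mul_add]
    _ ≤ (1 + p') / 2 :=
        ENNReal.div_le_div_right (hp' ▸ measure_add_measure_le_one_add_inter μ' W₀' hW₁') 2
    _ = 1/2 + p'/2 := ENNReal.add_div

/-- If `p' = Pr[W₀' ∧ W₁']` with `Pr[W₀'] = Pr[W₀ | b = 0]` and `Pr[W₁'] = Pr[W₁ | b = 1]`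
for a uniform bit `b`, then `Pr[W₀ ∧ W₁] ≤ 1/2 + p'/2`. -/
theorem stmt_3 {Ω Ω' : Type*} [MeasurableSpace Ω] [MeasurableSpace Ω']
    (μ : Measure Ω) [IsProbabilityMeasure μ] (μ' : Measure Ω') [IsProbabilityMeasure μ']
    (W₀ W₁ : Set Ω) (hW₀ : MeasurableSet W₀) (hW₁ : MeasurableSet W₁)
    (W₀' W₁' : Set Ω') (hW₀' : MeasurableSet W₀') (hW₁' : MeasurableSet W₁')
    (b : Ω → Bool) (hb : Measurable b)
    (hb0 : μ (b ⁻¹' {false}) = 1/2) (hb1 : μ (b ⁻¹' {true}) = 1/2)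
    (p' : ENNReal) (hp' : μ' (W₀' ∩ W₁') = p')
    (h0 : μ' W₀' = (μ[|b ⁻¹' {false}]) W₀)
    (h1 : μ' W₁' = (μ[|b ⁻¹' {true}]) W₁) :
    μ (W₀ ∩ W₁) ≤ 1/2 + p'/2 :=
  stmt_3_general μ μ' W₀ W₁ W₀' W₁' hW₁' b hb0 hb1 p' hp' h0 h1
end
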